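/- arXiv:0707.4501 — 2 statements merged into one kernel-verified Lean document; each statement's English description precedes it below -/
import Mathlib

section
/- Let a : ℝ^m → ℝⁿ be continuous, let b ∈ ℝⁿ have all components b_i > 0, and define f(x,y) = (Σ_i a_i(x)y_i)/(Σ_i b_iy_i) for x ∈ ℝ^m and y ∈ ℝ₊ⁿ∖{0}. Then for every x₀ ∈ ℝ^m, the lim inf of f(x,y) as x → x₀ and y → 0 with y ∈ ℝ₊ⁿ∖{0} equals min_{i∈{1,…,n}} a_i(x₀)/b_i. Moreover, if f is extended by f(x,0) := min_{i∈{1,…,n}} a_i(x)/b_i, then f is lower semicontinuous on ℝ^m × ℝ₊ⁿ and its restriction to ℝ^m × {0} is continuous. -/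
open Filter Set

/-- The extension of `f(x,y) = (Σᵢ aᵢ(x)yᵢ)/(Σᵢ bᵢyᵢ)` by `f(x,0) = minᵢ aᵢ(x)/bᵢ`. -/
noncomputable def Fext (m n : ℕ) (a : (Fin m → ℝ) → Fin n → ℝ) (b : Fin n → ℝ)
    (p : (Fin m → ℝ) × (Fin n → ℝ)) : ℝ :=
  if p.2 = 0 then ⨅ i, a p.1 i / b i
  else (∑ i, a p.1 i * p.2 i) / (∑ i, b i * p.2 i)

/-!
For `y ≥ 0`, `y ≠ 0`, the ratio `(Σᵢ aᵢ(x)yᵢ)/(Σᵢ bᵢyᵢ)` is an average of the `aᵢ(x)/bᵢ` with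
weights `bᵢyᵢ`, hence at least `g(x) = minᵢ aᵢ(x)/bᵢ`, which is continuous in `x`. Along
`y = t eⱼ`, `t → 0⁺`, with `j` a minimising index at `x₀`, the ratio equals `g(x₀)`; so the liminf
is `g(x₀)`, and the extension is lower semicontinuous at `y = 0` because it has the continuous
minorant `g` touching it there. Away from `y = 0` it is simply continuous.
-/

open Topology

theorem continuous_ciInf_of_finite {X L ι : Type*} [TopologicalSpace X]
    [ConditionallyCompleteLinearOrder L] [TopologicalSpace L] [OrderClosedTopology L]
    [Fintype ι] [Nonempty ι] {f : ι → X → L} (hf : ∀ i, Continuous (f i)) :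
    Continuous fun x => ⨅ i, f i x := by
  simpa only [Finset.inf'_univ_eq_ciInf] using
    Continuous.finset_inf'_apply Finset.univ_nonempty fun i _ => hf i

theorem liminf_eq_of_tendsto_of_le_of_frequently_le {α β : Type*}
    [ConditionallyCompleteLinearOrder β] [TopologicalSpace β] [OrderTopology β]
    {F : Filter α} {f g : α → β} {L : β} (hg : Tendsto g F (𝓝 L)) (hgf : g ≤ᶠ[F] f)
    (hf : ∃ᶠ p in F, f p ≤ L) : liminf f F = L := by
  have : F.NeBot := (frequently_true_iff_neBot F).1 (hf.mono fun _ _ => trivial)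
  refine le_antisymm (liminf_le_of_frequently_le hf (hg.isBoundedUnder_ge.mono_ge hgf)) ?_
  calc L = liminf g F := hg.liminf_eq.symm
    _ ≤ liminf f F :=
      liminf_le_liminf hgf hg.isBoundedUnder_ge (IsCoboundedUnder.of_frequently_le hf)

theorem LowerSemicontinuousWithinAt.of_minorant {α β : Type*} [TopologicalSpace α] [Preorder β]
    {f g : α → β} {s : Set α} {x : α} (hg : LowerSemicontinuousWithinAt g s x)
    (hgf : ∀ y ∈ s, g y ≤ f y) (hx : f x ≤ g x) : LowerSemicontinuousWithinAt f s x :=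
  fun c hc => (hg c (hc.trans_le hx)).mp <|
    eventually_nhdsWithin_of_forall fun y hy hgy => hgy.trans_le (hgf y hy)

section Ratio

variable {ι : Type*} [Fintype ι] {a b y : ι → ℝ}

theorem sum_mul_pos_of_pos_of_nonneg_of_ne_zero (hb : ∀ i, 0 < b i) (hy : 0 ≤ y)
    (hy0 : y ≠ 0) : 0 < ∑ i, b i * y i := by
  obtain ⟨j, hj⟩ := Function.ne_iff.1 hy0
  exact Finset.sum_pos' (fun i _ => mul_nonneg (hb i).le (hy i))
    ⟨j, Finset.mem_univ j, mul_pos (hb j) ((hy j).lt_of_ne (Ne.symm hj))⟩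

theorem iInf_div_le_sum_mul_div_sum_mul (hb : ∀ i, 0 < b i) (hy : 0 ≤ y) (hy0 : y ≠ 0) :
    ⨅ i, a i / b i ≤ (∑ i, a i * y i) / ∑ i, b i * y i := by
  rw [le_div_iff₀ (sum_mul_pos_of_pos_of_nonneg_of_ne_zero hb hy hy0), Finset.mul_sum]
  refine Finset.sum_le_sum fun i _ => ?_
  calc (⨅ i, a i / b i) * (b i * y i) ≤ a i / b i * (b i * y i) :=
        mul_le_mul_of_nonneg_right (ciInf_le (Finite.bddBelow_range _) i)
          (mul_nonneg (hb i).le (hy i))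
    _ = a i * y i := by field_simp [(hb i).ne']

theorem sum_mul_single_div_sum_mul_single [DecidableEq ι] (j : ι) {t : ℝ} (ht : t ≠ 0) :
    (∑ i, a i * (Pi.single j t : ι → ℝ) i) / ∑ i, b i * (Pi.single j t : ι → ℝ) i =
      a j / b j := by
  simp only [Pi.single_apply, mul_ite, mul_zero, Finset.sum_ite_eq', Finset.mem_univ, if_true]
  exact mul_div_mul_right _ _ ht

end Ratio

section ParametrizedRatio

variable {X ι : Type*} [TopologicalSpace X] [Fintype ι]

theorem continuous_iInf_div [Nonempty ι] {a : X → ι → ℝ} (ha : Continuous a) (b : ι → ℝ) :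
    Continuous fun x => ⨅ i, a x i / b i :=
  continuous_ciInf_of_finite fun i => ((continuous_apply i).comp ha).div_const _

theorem continuousAt_sum_mul_div_sum_mul {a : X → ι → ℝ} (ha : Continuous a) {b : ι → ℝ}
    (hb : ∀ i, 0 < b i) {p : X × (ι → ℝ)} (hp : 0 ≤ p.2) (hp0 : p.2 ≠ 0) :
    ContinuousAt (fun q : X × (ι → ℝ) => (∑ i, a q.1 i * q.2 i) / ∑ i, b i * q.2 i) p :=
  ContinuousAt.div (by fun_prop) (by fun_prop)
    (sum_mul_pos_of_pos_of_nonneg_of_ne_zero hb hp hp0).ne'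

theorem frequently_sum_mul_div_sum_mul_le_iInf [Nonempty ι]
    (a : X → ι → ℝ) (b : ι → ℝ) (x₀ : X) :
    ∃ᶠ p in 𝓝[{p : X × (ι → ℝ) | 0 ≤ p.2 ∧ p.2 ≠ 0}] (x₀, 0),
      (∑ i, a p.1 i * p.2 i) / ∑ i, b i * p.2 i ≤ ⨅ i, a x₀ i / b i := by
  classical
  obtain ⟨j, hj⟩ := exists_eq_ciInf_of_finite (f := fun i => a x₀ i / b i)
  have hpath : Tendsto (fun t : ℝ => (x₀, (Pi.single j t : ι → ℝ))) (𝓝[>] 0)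
      (𝓝[{p : X × (ι → ℝ) | 0 ≤ p.2 ∧ p.2 ≠ 0}] (x₀, 0)) := by
    refine tendsto_nhdsWithin_of_tendsto_nhds_of_eventually_within _ ?_ ?_
    · exact ((continuous_const.prodMk (continuous_single j)).tendsto' 0 _ (by simp)).mono_left
        nhdsWithin_le_nhds
    · exact eventually_mem_nhdsWithin.mono fun t ht =>
        ⟨Pi.single_nonneg.2 (le_of_lt ht), by simpa using ne_of_gt ht⟩
  refine hpath.frequently (Eventually.frequently (eventually_mem_nhdsWithin.mono fun t ht => ?_))
  rw [sum_mul_single_div_sum_mul_single j (ne_of_gt ht), hj]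

theorem liminf_sum_mul_div_sum_mul [Nonempty ι] {a : X → ι → ℝ} (ha : Continuous a)
    {b : ι → ℝ} (hb : ∀ i, 0 < b i) (x₀ : X) :
    liminf (fun p : X × (ι → ℝ) => (∑ i, a p.1 i * p.2 i) / ∑ i, b i * p.2 i)
      (𝓝[{p : X × (ι → ℝ) | 0 ≤ p.2 ∧ p.2 ≠ 0}] (x₀, 0)) = ⨅ i, a x₀ i / b i := by
  have hlim : Tendsto (fun p : X × (ι → ℝ) => ⨅ i, a p.1 i / b i)
      (𝓝[{p : X × (ι → ℝ) | 0 ≤ p.2 ∧ p.2 ≠ 0}] (x₀, 0)) (𝓝 (⨅ i, a x₀ i / b i)) :=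
    (((continuous_iInf_div ha b).comp continuous_fst).tendsto (x₀, 0)).mono_left
      nhdsWithin_le_nhds
  exact liminf_eq_of_tendsto_of_le_of_frequently_le hlim
    (eventually_nhdsWithin_of_forall fun p hp => iInf_div_le_sum_mul_div_sum_mul hb hp.1 hp.2)
    (frequently_sum_mul_div_sum_mul_le_iInf a b x₀)

end ParametrizedRatio

section Extension

variable {m n : ℕ} {a : (Fin m → ℝ) → Fin n → ℝ} {b : Fin n → ℝ} {p : (Fin m → ℝ) × (Fin n → ℝ)}

theorem Fext_of_snd_eq_zero (h : p.2 = 0) : Fext m n a b p = ⨅ i, a p.1 i / b i := if_pos h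

theorem Fext_of_snd_ne_zero (h : p.2 ≠ 0) :
    Fext m n a b p = (∑ i, a p.1 i * p.2 i) / ∑ i, b i * p.2 i := if_neg h

theorem iInf_div_le_Fext (hb : ∀ i, 0 < b i) (hp : 0 ≤ p.2) :
    ⨅ i, a p.1 i / b i ≤ Fext m n a b p := by
  by_cases h0 : p.2 = 0
  · exact (Fext_of_snd_eq_zero h0).ge
  · rw [Fext_of_snd_ne_zero h0]
    exact iInf_div_le_sum_mul_div_sum_mul hb hp h0

theorem lowerSemicontinuousOn_Fext [Nonempty (Fin n)] (ha : Continuous a) (hb : ∀ i, 0 < b i) :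
    LowerSemicontinuousOn (Fext m n a b) {p | 0 ≤ p.2} := by
  intro p hp
  by_cases h0 : p.2 = 0
  · exact ((continuous_iInf_div ha b).comp continuous_fst).continuousWithinAt
      |>.lowerSemicontinuousWithinAt.of_minorant (fun q hq => iInf_div_le_Fext hb hq)
        (Fext_of_snd_eq_zero h0).le
  · have hFext : (fun q : (Fin m → ℝ) × (Fin n → ℝ) =>
        (∑ i, a q.1 i * q.2 i) / ∑ i, b i * q.2 i) =ᶠ[𝓝 p] Fext m n a b :=
      ((isOpen_ne_fun continuous_snd continuous_const).eventually_mem h0).mono fun q hq =>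
        (Fext_of_snd_ne_zero hq).symm
    exact ((continuousAt_sum_mul_div_sum_mul ha hb hp h0).congr hFext).continuousWithinAt
      |>.lowerSemicontinuousWithinAt

end Extension

/-- The liminf lemma: as `x → x₀` and `y → 0` in the nonnegative orthant minus the origin,
`liminf (a(x)·y)/(b·y) = minᵢ aᵢ(x₀)/bᵢ`; the extended function is lower semicontinuous on
`ℝ^m × ℝ₊ⁿ` and its restriction to `ℝ^m × {0}` is continuous. -/
theorem liminf_ratio_lemma
    (m n : ℕ) (hn : 0 < n)
    (a : (Fin m → ℝ) → Fin n → ℝ) (ha : Continuous a)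
    (b : Fin n → ℝ) (hb : ∀ i, 0 < b i) :
    (∀ x₀ : Fin m → ℝ,
      Filter.liminf
        (fun p : (Fin m → ℝ) × (Fin n → ℝ) =>
          (∑ i, a p.1 i * p.2 i) / (∑ i, b i * p.2 i))
        (nhdsWithin (x₀, 0) {p : (Fin m → ℝ) × (Fin n → ℝ) | (∀ i, 0 ≤ p.2 i) ∧ p.2 ≠ 0})
      = ⨅ i, a x₀ i / b i) ∧
    LowerSemicontinuousOn (Fext m n a b)
      {p : (Fin m → ℝ) × (Fin n → ℝ) | ∀ i, 0 ≤ p.2 i} ∧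
    Continuous (fun x : Fin m → ℝ => Fext m n a b (x, 0)) := by
  have : Nonempty (Fin n) := ⟨⟨0, hn⟩⟩
  exact ⟨liminf_sum_mul_div_sum_mul ha hb, lowerSemicontinuousOn_Fext ha hb,
    (continuous_iInf_div ha b).congr fun x => (Fext_of_snd_eq_zero (p := (x, 0)) rfl).symm⟩
end

section
/- Fix μ ∈ [0, min_i(−1/q_ii)] and let A(μ) = Γ⁻¹(N̂P(μ) − I)K. A point (T̂, T̂*, V̂) ∈ ℝ₊^{2n+1} with T̂ > 0 and V̂ ≠ 0 is an equilibrium of Model I' if and only if: A(μ)V̂ = (1/T̂)V̂, T̂* = (N̂B)⁻¹(Γ + T̂K)V̂, and k'V̂ = f(T̂)/T̂. In particular, for such an equilibrium all components of (T̂*, V̂) are positive (respectively nonnegative) if and only if V̂ is componentwise positive (respectively nonnegative), i.e. 1/T̂ is an eigenvalue of A(μ) with a positive (nonnegative) eigenvector. -/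
open Matrix

/-- The matrix `A(μ) = Γ⁻¹ (N̂ P(μ) − I) K` with `P(μ) = I + μQ`. -/
noncomputable def AmuLoss (n : ℕ) (k γ N : Fin n → ℝ) (Q : Matrix (Fin n) (Fin n) ℝ) (μ : ℝ) :
    Matrix (Fin n) (Fin n) ℝ :=
  Matrix.diagonal (fun i => (γ i)⁻¹) * (Matrix.diagonal N * (1 + μ • Q) - 1) * Matrix.diagonal k

/-!
Solving the `V̇`-equation for `T̂*` and substituting into the `Ṫ*`-equation turns the latter into
`N̂ P(μ) K V̂ = (Γ + T̂ K) V̂ / T̂`, which is the eigenvalue equation `A(μ) V̂ = V̂ / T̂`; the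
`Ṫ`-equation is `k'V̂ = f(T̂)/T̂`. Since `T̂*` is `V̂` scaled by the positive diagonal
`(N̂B)⁻¹(Γ + T̂K)`, it inherits positivity and nonnegativity from `V̂`.
-/

theorem Matrix.diagonal_mul_sub_one_mul_diagonal_mulVec {ι R : Type*} [Fintype ι]
    [DecidableEq ι] [CommRing R] (a b c : ι → R) (P : Matrix ι ι R) (v : ι → R) :
    (diagonal a * (diagonal b * P - 1) * diagonal c) *ᵥ v = a * (b * (P *ᵥ (c * v)) - c * v) := by
  have hc : diagonal c *ᵥ v = c * v := funext (mulVec_diagonal c v)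
  ext i
  simp only [← mulVec_mulVec, hc, sub_mulVec, one_mulVec, mulVec_diagonal, Pi.mul_apply,
    Pi.sub_apply]

namespace ModelIp

theorem virus_balance_iff {k β γ N T ts v : ℝ} (hN : N ≠ 0) (hβ : β ≠ 0) :
    N * β * ts - γ * v - k * v * T = 0 ↔ ts = (γ + T * k) * v / (N * β) := by
  rw [eq_div_iff (mul_ne_zero hN hβ)]
  constructor <;> intro h <;> linear_combination h

variable {ι : Type*} [Fintype ι]
  (k β γ N : ι → ℝ) (P : Matrix ι ι ℝ) (f : ℝ → ℝ) (T : ℝ) (Ts V : ι → ℝ)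

/-- The three right-hand sides of Model I' vanish, with `P(μ)` replaced by an arbitrary `P`. -/
def IsEquilibrium : Prop :=
  f T - (∑ i, k i * V i) * T = 0 ∧
    (∀ i, (P *ᵥ fun j => k j * V j * T) i - β i * Ts i = 0) ∧
    (∀ i, N i * β i * Ts i - γ i * V i - k i * V i * T = 0)

variable {k β γ N P f T Ts V}

theorem isEquilibrium_iff [DecidableEq ι] (hβ : ∀ i, β i ≠ 0) (hγ : ∀ i, γ i ≠ 0) (hN : ∀ i, N i ≠ 0)
    (hT : T ≠ 0) :
    IsEquilibrium k β γ N P f T Ts V ↔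
      (diagonal (fun i => (γ i)⁻¹) * (diagonal N * P - 1) * diagonal k) *ᵥ V = (1 / T) • V ∧
        (∀ i, Ts i = (γ i + T * k i) * V i / (N i * β i)) ∧ ∑ i, k i * V i = f T / T := by
  have target : f T - (∑ i, k i * V i) * T = 0 ↔ ∑ i, k i * V i = f T / T := by
    rw [sub_eq_zero, eq_div_iff hT, eq_comm]
  have virus : (∀ i, N i * β i * Ts i - γ i * V i - k i * V i * T = 0) ↔
      ∀ i, Ts i = (γ i + T * k i) * V i / (N i * β i) :=
    forall_congr' fun i => virus_balance_iff (hN i) (hβ i)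
  have infected (hTs : ∀ i, Ts i = (γ i + T * k i) * V i / (N i * β i)) :
      (∀ i, (P *ᵥ fun j => k j * V j * T) i - β i * Ts i = 0) ↔
        (diagonal (fun i => (γ i)⁻¹) * (diagonal N * P - 1) * diagonal k) *ᵥ V = (1 / T) • V := by
    have hKVT : (fun j => k j * V j * T) = T • (k * V) := by
      ext j
      simp only [Pi.smul_apply, Pi.mul_apply, smul_eq_mul]
      ring
    rw [diagonal_mul_sub_one_mul_diagonal_mulVec, funext_iff, hKVT, mulVec_smul]
    refine forall_congr' fun i => ?_
    simp only [hTs i, Pi.smul_apply, Pi.mul_apply, Pi.sub_apply, smul_eq_mul]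
    have := hβ i; have := hγ i; have := hN i
    field_simp
    constructor <;> intro h <;> linear_combination h
  constructor
  · rintro ⟨hf, hP, hV⟩
    exact ⟨(infected (virus.1 hV)).1 hP, virus.1 hV, target.1 hf⟩
  · rintro ⟨hA, hTs, hf⟩
    exact ⟨target.2 hf, (infected hTs).2 hA, virus.2 hTs⟩

theorem IsEquilibrium.infected_eq_mul_virus (h : IsEquilibrium k β γ N P f T Ts V)
    (hβ : ∀ i, β i ≠ 0) (hN : ∀ i, N i ≠ 0) (i : ι) :
    Ts i = (γ i + T * k i) / (N i * β i) * V i := by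
  rw [div_mul_eq_mul_div, ← virus_balance_iff (hN i) (hβ i)]
  exact h.2.2 i

end ModelIp

open ModelIp in
theorem modelIp_equilibrium_characterization_general
    (n : ℕ) (k β γ N : Fin n → ℝ)
    (hk : ∀ i, 0 < k i) (hβ : ∀ i, 0 < β i) (hγ : ∀ i, 0 < γ i) (hN : ∀ i, 0 < N i)
    (Q : Matrix (Fin n) (Fin n) ℝ)
    (f : ℝ → ℝ)
    (μ : ℝ)
    (That : ℝ) (Tshat Vhat : Fin n → ℝ)
    (hThat : 0 < That) :
    -- equilibrium characterization
    ((f That - (∑ i, k i * Vhat i) * That = 0 ∧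
      (∀ i, (1 + μ • Q).mulVec (fun j => k j * Vhat j * That) i - β i * Tshat i = 0) ∧
      (∀ i, N i * β i * Tshat i - γ i * Vhat i - k i * Vhat i * That = 0))
     ↔
     ((AmuLoss n k γ N Q μ).mulVec Vhat = (1 / That) • Vhat ∧
      (∀ i, Tshat i = (γ i + That * k i) * Vhat i / (N i * β i)) ∧
      ∑ i, k i * Vhat i = f That / That)) ∧
    -- positivity / nonnegativity of equilibrium components
    ((f That - (∑ i, k i * Vhat i) * That = 0 ∧
      (∀ i, (1 + μ • Q).mulVec (fun j => k j * Vhat j * That) i - β i * Tshat i = 0) ∧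
      (∀ i, N i * β i * Tshat i - γ i * Vhat i - k i * Vhat i * That = 0)) →
      ((((∀ i, 0 < Tshat i) ∧ (∀ i, 0 < Vhat i)) ↔ (∀ i, 0 < Vhat i)) ∧
       (((∀ i, 0 ≤ Tshat i) ∧ (∀ i, 0 ≤ Vhat i)) ↔ (∀ i, 0 ≤ Vhat i)))) := by
  have hβ₀ i := (hβ i).ne'
  have hN₀ i := (hN i).ne'
  refine ⟨isEquilibrium_iff hβ₀ (fun i => (hγ i).ne') hN₀ hThat.ne', fun heq => ?_⟩
  have hTs := IsEquilibrium.infected_eq_mul_virus heq hβ₀ hN₀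
  have hscale i : 0 < (γ i + That * k i) / (N i * β i) := by
    have := hk i; have := hγ i; have := hN i; have := hβ i
    positivity
  exact ⟨and_iff_right_of_imp fun hV i => hTs i ▸ mul_pos (hscale i) (hV i),
    and_iff_right_of_imp fun hV i => hTs i ▸ mul_nonneg (hscale i).le (hV i)⟩

/-- Characterization of the nontrivial equilibria of Model I'
(`Ṫ = f(T) − (k'V)T`, `Ṫ* = P(μ)KVT − BT*`, `V̇ = N̂BT* − ΓV − KVT`): a point
`(T̂, T̂*, V̂) ∈ ℝ₊^{2n+1}` with `T̂ > 0`, `V̂ ≠ 0` is an equilibrium iff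
`A(μ)V̂ = (1/T̂)V̂`, `T̂* = (N̂B)⁻¹(Γ + T̂K)V̂` and `k'V̂ = f(T̂)/T̂`; in particular all
components of `(T̂*, V̂)` are positive (resp. nonnegative) iff `V̂` is positive
(resp. nonnegative). -/
theorem modelIp_equilibrium_characterization
    (n : ℕ) (hn : 2 ≤ n) (k β γ N : Fin n → ℝ)
    (hk : ∀ i, 0 < k i) (hβ : ∀ i, 0 < β i) (hγ : ∀ i, 0 < γ i) (hN : ∀ i, 0 < N i)
    (Q : Matrix (Fin n) (Fin n) ℝ)
    (hQoff : ∀ i j, i ≠ j → 0 ≤ Q i j) (hQcol : ∀ j, ∑ i, Q i j = 0)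
    (f : ℝ → ℝ) (hf : ContDiffOn ℝ 1 f (Set.Ici 0))
    (μ : ℝ) (hμ0 : 0 ≤ μ) (hμ1 : ∀ i, μ ≤ -1 / Q i i)
    (That : ℝ) (Tshat Vhat : Fin n → ℝ)
    (hThat : 0 < That) (hTshat : ∀ i, 0 ≤ Tshat i) (hVhat : ∀ i, 0 ≤ Vhat i)
    (hVne : Vhat ≠ 0) :
    -- equilibrium characterization
    ((f That - (∑ i, k i * Vhat i) * That = 0 ∧
      (∀ i, (1 + μ • Q).mulVec (fun j => k j * Vhat j * That) i - β i * Tshat i = 0) ∧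
      (∀ i, N i * β i * Tshat i - γ i * Vhat i - k i * Vhat i * That = 0))
     ↔
     ((AmuLoss n k γ N Q μ).mulVec Vhat = (1 / That) • Vhat ∧
      (∀ i, Tshat i = (γ i + That * k i) * Vhat i / (N i * β i)) ∧
      ∑ i, k i * Vhat i = f That / That)) ∧
    -- positivity / nonnegativity of equilibrium components
    ((f That - (∑ i, k i * Vhat i) * That = 0 ∧
      (∀ i, (1 + μ • Q).mulVec (fun j => k j * Vhat j * That) i - β i * Tshat i = 0) ∧
      (∀ i, N i * β i * Tshat i - γ i * Vhat i - k i * Vhat i * That = 0)) →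
      ((((∀ i, 0 < Tshat i) ∧ (∀ i, 0 < Vhat i)) ↔ (∀ i, 0 < Vhat i)) ∧
       (((∀ i, 0 ≤ Tshat i) ∧ (∀ i, 0 ≤ Vhat i)) ↔ (∀ i, 0 ≤ Vhat i)))) :=
  modelIp_equilibrium_characterization_general n k β γ N hk hβ hγ hN Q f μ That Tshat Vhat hThat
end
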